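/- For the harmonic-curve SODE with F^{(i)}_{(1)1} = γ^i_{jk}(x)x₁^j x₁^k − H¹₁₁(t)x₁^i, where γ^i_{jk} is symmetric in its lower indices, the second h-KCC-invariant equals P^i_{j11} = −R^i_{pqj} x₁^p x₁^q, where R^i_{pqj} = ∂γ^i_{pq}/∂x^j − ∂γ^i_{pj}/∂x^q + γ^r_{pq}γ^i_{rj} − γ^r_{pj}γ^i_{rq} is the curvature tensor of the connection γ. -/

import Mathlib

noncomputable section

/-- Partial derivative of `f` with respect to the `j`-th coordinate at `x`. -/
def pd {n : ℕ} (f : (Fin n → ℝ) → ℝ) (x : Fin n → ℝ) (j : Fin n) : ℝ :=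
  deriv (fun s => f (Function.update x j s)) (x j)

/-- The first h-KCC-invariant
`ε^{(i)}_{(1)1} = −F^{(i)} + (1/2)(∂F^{(i)}/∂x₁^r) x₁^r − (1/2) H¹₁₁ x₁^i`. -/
def eps {n : ℕ} (F : ℝ → (Fin n → ℝ) → (Fin n → ℝ) → Fin n → ℝ) (H : ℝ → ℝ)
    (t : ℝ) (x v : Fin n → ℝ) (i : Fin n) : ℝ :=
  -F t x v i + (1 / 2) * ∑ r, pd (fun w => F t x w i) v r * v r
    - (1 / 2) * H t * v i

/-- The second h-KCC-invariant (jet h-deviation curvature tensor) `P^i_{j11}`. -/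
def Pdev {n : ℕ} (F : ℝ → (Fin n → ℝ) → (Fin n → ℝ) → Fin n → ℝ) (H : ℝ → ℝ)
    (t : ℝ) (x v : Fin n → ℝ) (i j : Fin n) : ℝ :=
  -pd (fun y => F t y v i) x j
    + (1 / 2) * deriv (fun s => pd (fun w => F s x w i) v j) t
    + (1 / 2) * ∑ r, pd (fun y => pd (fun w => F t y w i) v j) x r * v r
    - (1 / 2) * ∑ r, pd (fun w => pd (fun w' => F t x w' i) w j) v r * F t x v r
    + (1 / 4) * ∑ r, pd (fun w => F t x w i) v r * pd (fun w => F t x w r) v j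
    + (1 / 2) * deriv H t * (if i = j then (1 : ℝ) else 0)
    - (1 / 4) * (H t) ^ 2 * (if i = j then (1 : ℝ) else 0)

/-- The third h-KCC-invariant
`R^i_{jk1} = (1/3)[∂P^i_{j11}/∂x₁^k − ∂P^i_{k11}/∂x₁^j]`. -/
def Rcurv {n : ℕ} (F : ℝ → (Fin n → ℝ) → (Fin n → ℝ) → Fin n → ℝ) (H : ℝ → ℝ)
    (t : ℝ) (x v : Fin n → ℝ) (i j k : Fin n) : ℝ :=
  (1 / 3) * (pd (fun w => Pdev F H t x w i j) v k
    - pd (fun w => Pdev F H t x w i k) v j)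

/-- The fourth h-KCC-invariant `B^i_{jkm} = ∂R^i_{jk1}/∂x₁^m`. -/
def Bcurv {n : ℕ} (F : ℝ → (Fin n → ℝ) → (Fin n → ℝ) → Fin n → ℝ) (H : ℝ → ℝ)
    (t : ℝ) (x v : Fin n → ℝ) (i j k m : Fin n) : ℝ :=
  pd (fun w => Rcurv F H t x w i j k) v m

/-- The fifth h-KCC-invariant `D^{i1}_{jkm} = ∂³F^{(i)}/∂x₁^j∂x₁^k∂x₁^m`. -/
def Dtens {n : ℕ} (F : ℝ → (Fin n → ℝ) → (Fin n → ℝ) → Fin n → ℝ)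
    (t : ℝ) (x v : Fin n → ℝ) (i j k m : Fin n) : ℝ :=
  pd (fun w => pd (fun w' => pd (fun w'' => F t x w'' i) w' j) w k) v m

/-- The curvature tensor of a (time-independent) symmetric linear connection:
`𝔯^i_{pqj} = ∂Γ^i_{pq}/∂x^j − ∂Γ^i_{pj}/∂x^q + Γ^r_{pq}Γ^i_{rj} − Γ^r_{pj}Γ^i_{rq}`. -/
def curv {n : ℕ} (Γ : (Fin n → ℝ) → Fin n → Fin n → Fin n → ℝ)
    (x : Fin n → ℝ) (i p q j : Fin n) : ℝ :=
  pd (fun y => Γ y i p q) x j - pd (fun y => Γ y i p j) x q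
    + ∑ r, Γ x r p q * Γ x i r j - ∑ r, Γ x r p j * Γ x i r q

/-- Smoothness of a local object on the 1-jet space. -/
def SmoothJet {n : ℕ} (G : ℝ → (Fin n → ℝ) → (Fin n → ℝ) → Fin n → ℝ) : Prop :=
  ContDiff ℝ (⊤ : ℕ∞) (fun p : ℝ × (Fin n → ℝ) × (Fin n → ℝ) => G p.1 p.2.1 p.2.2)

variable {n : ℕ}

lemma hasDerivAt_upd (v : Fin n → ℝ) (j p : Fin n) (y : ℝ) :
    HasDerivAt (fun s => Function.update v j s p) (if p = j then (1:ℝ) else 0) y := by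
  simp only [Function.update_apply]
  split
  · simpa using hasDerivAt_id' y
  · simpa using hasDerivAt_const y (v p)

lemma differentiable_update (x : Fin n → ℝ) (j : Fin n) :
    Differentiable ℝ (fun s : ℝ => Function.update x j s) := by
  rw [differentiable_pi]
  intro p
  simp only [Function.update_apply]
  split
  · exact differentiable_id
  · exact differentiable_const _

lemma hasDerivAt_pd (f : (Fin n → ℝ) → ℝ) (hf : Differentiable ℝ f) (x : Fin n → ℝ) (j : Fin n) :
    HasDerivAt (fun s => f (Function.update x j s)) (pd f x j) (x j) :=
  ((hf.comp (differentiable_update x j)) (x j)).hasDerivAt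

lemma pd_quad (c : Fin n → Fin n → ℝ) (h : ℝ) (v : Fin n → ℝ) (i j : Fin n) :
    pd (fun w => (∑ p, ∑ q, c p q * w p * w q) - h * w i) v j
      = (∑ q, c j q * v q) + (∑ p, c p j * v p) - h * (if i = j then 1 else 0) := by
  have hpq : ∀ p q : Fin n, HasDerivAt
      (fun s => c p q * Function.update v j s p * Function.update v j s q)
      ((c p q * (if p = j then 1 else 0)) * v q + (c p q * v p) * (if q = j then 1 else 0)) (v j) := by
    intro p q
    have h1 := (hasDerivAt_upd v j p (v j)).const_mul (c p q)
    have h2 := hasDerivAt_upd v j q (v j)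
    have := h1.fun_mul h2
    simpa [Function.update_eq_self] using this
  have hd : HasDerivAt (fun s => (∑ p, ∑ q, c p q * Function.update v j s p * Function.update v j s q)
        - h * Function.update v j s i)
      ((∑ p, ∑ q, ((c p q * (if p = j then 1 else 0)) * v q + (c p q * v p) * (if q = j then 1 else 0)))
        - h * (if i = j then 1 else 0)) (v j) :=
    (HasDerivAt.fun_sum fun p _ => HasDerivAt.fun_sum fun q _ => hpq p q).fun_sub
      ((hasDerivAt_upd v j i (v j)).const_mul h)
  have := hd.deriv
  rw [pd, this]
  congr 1
  simp [mul_ite, ite_mul, Finset.sum_add_distrib, Finset.sum_ite_eq, Finset.sum_ite_eq']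

lemma pd_lin (c d : Fin n → ℝ) (k : ℝ) (v : Fin n → ℝ) (r : Fin n) :
    pd (fun w => (∑ q, c q * w q) + (∑ p, d p * w p) - k) v r = c r + d r := by
  have hd : HasDerivAt (fun s => (∑ q, c q * Function.update v r s q)
        + (∑ p, d p * Function.update v r s p) - k)
      ((∑ q, c q * (if q = r then 1 else 0)) + (∑ p, d p * (if p = r then 1 else 0)) - 0) (v r) :=
    (((HasDerivAt.fun_sum fun q _ => (hasDerivAt_upd v r q (v r)).const_mul (c q)).fun_add
      (HasDerivAt.fun_sum fun p _ => (hasDerivAt_upd v r p (v r)).const_mul (d p))).fun_sub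
      (hasDerivAt_const _ k))
  have := hd.deriv
  rw [pd, this]
  simp [mul_ite, Finset.sum_ite_eq']

lemma pd_gsum2 (f : Fin n → Fin n → (Fin n → ℝ) → ℝ) (hf : ∀ p q, Differentiable ℝ (f p q))
    (a : Fin n → Fin n → ℝ) (k : ℝ) (x : Fin n → ℝ) (r : Fin n) :
    pd (fun y => (∑ p, ∑ q, f p q y * a p q) - k) x r = ∑ p, ∑ q, pd (f p q) x r * a p q := by
  have hd : HasDerivAt (fun s => (∑ p, ∑ q, f p q (Function.update x r s) * a p q) - k)
      ((∑ p, ∑ q, pd (f p q) x r * a p q) - 0) (x r) :=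
    (HasDerivAt.fun_sum fun p _ => HasDerivAt.fun_sum fun q _ =>
      (hasDerivAt_pd (f p q) (hf p q) x r).mul_const (a p q)).fun_sub (hasDerivAt_const _ k)
  have := hd.deriv
  rw [pd, this, sub_zero]

lemma pd_gsum11 (f g : Fin n → (Fin n → ℝ) → ℝ) (hf : ∀ p, Differentiable ℝ (f p))
    (hg : ∀ p, Differentiable ℝ (g p))
    (a b : Fin n → ℝ) (k : ℝ) (x : Fin n → ℝ) (r : Fin n) :
    pd (fun y => (∑ q, f q y * a q) + (∑ p, g p y * b p) - k) x r
      = (∑ q, pd (f q) x r * a q) + (∑ p, pd (g p) x r * b p) := by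
  have hd : HasDerivAt (fun s => (∑ q, f q (Function.update x r s) * a q)
        + (∑ p, g p (Function.update x r s) * b p) - k)
      ((∑ q, pd (f q) x r * a q) + (∑ p, pd (g p) x r * b p) - 0) (x r) :=
    (((HasDerivAt.fun_sum fun q _ => (hasDerivAt_pd (f q) (hf q) x r).mul_const (a q)).fun_add
      (HasDerivAt.fun_sum fun p _ => (hasDerivAt_pd (g p) (hg p) x r).mul_const (b p))).fun_sub
      (hasDerivAt_const _ k))
  have := hd.deriv
  rw [pd, this, sub_zero]

/-- The second h-KCC-invariant of the SODE of harmonic curves equals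
`P^i_{j11} = −R^i_{pqj} x₁^p x₁^q`, with `R` the curvature of the connection `γ`. -/
theorem deviation_curvature_of_harmonic_curves {n : ℕ}
    (γ : (Fin n → ℝ) → Fin n → Fin n → Fin n → ℝ) (H : ℝ → ℝ)
    (hγ : ∀ i j k, ContDiff ℝ (⊤ : ℕ∞) (fun x => γ x i j k))
    (hsym : ∀ x i j k, γ x i j k = γ x i k j)
    (hH : ContDiff ℝ (⊤ : ℕ∞) H) :
    ∀ (t : ℝ) (x v : Fin n → ℝ) (i j : Fin n),
      Pdev (fun s y w i' => (∑ p, ∑ q, γ y i' p q * w p * w q) - H s * w i')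
          H t x v i j =
        -∑ p, ∑ q, curv γ x i p q j * v p * v q := by
  intro t x v i j
  have hγd : ∀ i' p q, Differentiable ℝ (fun y => γ y i' p q) :=
    fun i' p q => (hγ i' p q).differentiable (by simp)
  -- value of the velocity-partial of F
  have hW : ∀ (s : ℝ) (y : Fin n → ℝ) (i' j' : Fin n),
      pd (fun w => (∑ p, ∑ q, γ y i' p q * w p * w q) - H s * w i') v j'
        = (∑ q, γ y i' j' q * v q) + (∑ p, γ y i' p j' * v p)
          - H s * (if i' = j' then 1 else 0) :=
    fun s y i' j' => pd_quad (γ y i') (H s) v i' j'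
  have hWn : ∀ (s : ℝ) (y : Fin n → ℝ) (i' j' : Fin n),
      pd (fun w => (∑ p, ∑ q, γ y i' p q * w p * w q) - H s * w i') v j'
        = 2 * (∑ p, γ y i' p j' * v p) - H s * (if i' = j' then 1 else 0) := by
    intro s y i' j'
    have h1 : (∑ q, γ y i' j' q * v q) = (∑ p, γ y i' p j' * v p) :=
      Finset.sum_congr rfl fun q _ => by rw [hsym y i' j' q]
    rw [hW, h1]; ring
  -- Term 1
  have hT1 : pd (fun y => (∑ p, ∑ q, γ y i p q * v p * v q) - H t * v i) x j
      = ∑ p, ∑ q, pd (fun y => γ y i p q) x j * (v p * v q) := by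
    have h1 : (fun y => (∑ p, ∑ q, γ y i p q * v p * v q) - H t * v i)
        = fun y => (∑ p, ∑ q, γ y i p q * (v p * v q)) - H t * v i := by
      funext y; simp [mul_assoc]
    rw [h1, pd_gsum2 _ (fun p q => hγd i p q)]
  -- Term 2
  have hT2 : deriv (fun s => pd (fun w =>
        (∑ p, ∑ q, γ x i p q * w p * w q) - H s * w i) v j) t
      = -(deriv H t * (if i = j then (1:ℝ) else 0)) := by
    have h1 : (fun s => pd (fun w => (∑ p, ∑ q, γ x i p q * w p * w q) - H s * w i) v j)
        = fun s => (∑ q, γ x i j q * v q) + (∑ p, γ x i p j * v p)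
            - H s * (if i = j then 1 else 0) := funext fun s => hW s x i j
    rw [h1]
    exact (HasDerivAt.const_sub _
      (((hH.differentiable (by simp) t).hasDerivAt).mul_const _)).deriv
  -- Term 3 inner
  have hT3i : ∀ r, pd (fun y => pd (fun w =>
        (∑ p, ∑ q, γ y i p q * w p * w q) - H t * w i) v j) x r
      = (∑ q, pd (fun y => γ y i j q) x r * v q)
        + (∑ p, pd (fun y => γ y i p j) x r * v p) := by
    intro r
    have h1 : (fun y => pd (fun w => (∑ p, ∑ q, γ y i p q * w p * w q) - H t * w i) v j)
        = fun y => (∑ q, γ y i j q * v q) + (∑ p, γ y i p j * v p)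
            - H t * (if i = j then 1 else 0) := funext fun y => hW t y i j
    rw [h1]
    exact pd_gsum11 _ _ (fun q => hγd i j q) (fun p => hγd i p j) v v _ x r
  -- Term 4 inner
  have hT4i : ∀ r, pd (fun w => pd (fun w' =>
        (∑ p, ∑ q, γ x i p q * w' p * w' q) - H t * w' i) w j) v r
      = γ x i j r + γ x i r j := by
    intro r
    have h1 : (fun w => pd (fun w' => (∑ p, ∑ q, γ x i p q * w' p * w' q) - H t * w' i) w j)
        = fun w => (∑ q, γ x i j q * w q) + (∑ p, γ x i p j * w p)
            - H t * (if i = j then 1 else 0) := funext fun w => pd_quad (γ x i) (H t) w i j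
    rw [h1]
    exact pd_lin _ _ _ v r
  -- sum lemma A (term 3)
  have hA : ∑ r, (((∑ q, pd (fun y => γ y i j q) x r * v q)
        + (∑ p, pd (fun y => γ y i p j) x r * v p)) * v r)
      = 2 * ∑ p, ∑ q, pd (fun y => γ y i p j) x q * (v p * v q) := by
    have e1 : ∀ r : Fin n, (((∑ q, pd (fun y => γ y i j q) x r * v q)
          + (∑ p, pd (fun y => γ y i p j) x r * v p)) * v r)
        = (∑ q, pd (fun y => γ y i q j) x r * (v q * v r))
          + (∑ p, pd (fun y => γ y i p j) x r * (v p * v r)) := by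
      intro r
      have h1 : (∑ q, pd (fun y => γ y i j q) x r * v q)
          = ∑ q, pd (fun y => γ y i q j) x r * v q := by
        refine Finset.sum_congr rfl fun q _ => ?_
        have : (fun y => γ y i j q) = (fun y => γ y i q j) := funext fun y => hsym y i j q
        rw [this]
      rw [h1, add_mul, Finset.sum_mul]
      simp [mul_assoc]
    calc ∑ r, (((∑ q, pd (fun y => γ y i j q) x r * v q)
          + (∑ p, pd (fun y => γ y i p j) x r * v p)) * v r)
        = ∑ r, ((∑ q, pd (fun y => γ y i q j) x r * (v q * v r))
          + (∑ p, pd (fun y => γ y i p j) x r * (v p * v r))) :=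
          Finset.sum_congr rfl fun r _ => e1 r
      _ = (∑ r, ∑ q, pd (fun y => γ y i q j) x r * (v q * v r))
          + (∑ r, ∑ p, pd (fun y => γ y i p j) x r * (v p * v r)) :=
          Finset.sum_add_distrib
      _ = 2 * ∑ p, ∑ q, pd (fun y => γ y i p j) x q * (v p * v q) := by
          have h1 : (∑ r, ∑ q, pd (fun y => γ y i q j) x r * (v q * v r))
              = ∑ p, ∑ q, pd (fun y => γ y i p j) x q * (v p * v q) := Finset.sum_comm
          rw [h1]; ring
  -- sum lemma B (term 4)
  have hB : ∑ r, ((γ x i j r + γ x i r j)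
        * ((∑ p, ∑ q, γ x r p q * v p * v q) - H t * v r))
      = 2 * (∑ p, ∑ q, (∑ r, γ x r p q * γ x i r j) * (v p * v q))
        - 2 * (H t * ∑ r, γ x i r j * v r) := by
    have e1 : ∀ r : Fin n, (γ x i j r + γ x i r j)
          * ((∑ p, ∑ q, γ x r p q * v p * v q) - H t * v r)
        = 2 * (∑ p, ∑ q, γ x r p q * γ x i r j * (v p * v q))
          - 2 * (H t * (γ x i r j * v r)) := by
      intro r
      have h2 : γ x i r j * (∑ p, ∑ q, γ x r p q * v p * v q)
          = ∑ p, ∑ q, γ x r p q * γ x i r j * (v p * v q) := by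
        rw [Finset.mul_sum]
        refine Finset.sum_congr rfl fun p _ => ?_
        rw [Finset.mul_sum]
        exact Finset.sum_congr rfl fun q _ => by ring
      rw [hsym x i j r]
      calc (γ x i r j + γ x i r j) * ((∑ p, ∑ q, γ x r p q * v p * v q) - H t * v r)
          = 2 * (γ x i r j * (∑ p, ∑ q, γ x r p q * v p * v q))
            - 2 * (H t * (γ x i r j * v r)) := by ring
        _ = _ := by rw [h2]
    have h3 : ∑ r, ∑ p, ∑ q, γ x r p q * γ x i r j * (v p * v q)
        = ∑ p, ∑ q, (∑ r, γ x r p q * γ x i r j) * (v p * v q) := by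
      rw [Finset.sum_comm]
      refine Finset.sum_congr rfl fun p _ => ?_
      rw [Finset.sum_comm]
      exact Finset.sum_congr rfl fun q _ => (Finset.sum_mul _ _ _).symm
    calc ∑ r, ((γ x i j r + γ x i r j) * ((∑ p, ∑ q, γ x r p q * v p * v q) - H t * v r))
        = ∑ r, (2 * (∑ p, ∑ q, γ x r p q * γ x i r j * (v p * v q))
            - 2 * (H t * (γ x i r j * v r))) := Finset.sum_congr rfl fun r _ => e1 r
      _ = 2 * (∑ r, ∑ p, ∑ q, γ x r p q * γ x i r j * (v p * v q))
            - 2 * (H t * ∑ r, γ x i r j * v r) := by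
          simp only [Finset.sum_sub_distrib, ← Finset.mul_sum]
      _ = _ := by rw [h3]
  -- reindexing lemma for the quadratic product sum
  have hS4 : ∑ p, ∑ q, (∑ r, γ x i p r * γ x r q j) * (v p * v q)
      = ∑ p, ∑ q, (∑ r, γ x r p j * γ x i r q) * (v p * v q) := by
    rw [Finset.sum_comm]
    refine Finset.sum_congr rfl fun p _ => Finset.sum_congr rfl fun q _ => ?_
    have h1 : (∑ r, γ x i q r * γ x r p j) = ∑ r, γ x r p j * γ x i r q :=
      Finset.sum_congr rfl fun r _ => by rw [hsym x i q r]; ring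
    rw [h1]; ring
  -- sum lemma C (term 5)
  have hC : ∑ r, ((2 * (∑ p, γ x i p r * v p) - H t * (if i = r then (1:ℝ) else 0))
        * (2 * (∑ p, γ x r p j * v p) - H t * (if r = j then (1:ℝ) else 0)))
      = 4 * (∑ p, ∑ q, (∑ r, γ x r p j * γ x i r q) * (v p * v q))
        - 4 * (H t * ∑ r, γ x i r j * v r)
        + (H t) ^ 2 * (if i = j then (1:ℝ) else 0) := by
    have ha : ∑ r, (∑ p, γ x i p r * v p) * (∑ q, γ x r q j * v q)
        = ∑ p, ∑ q, (∑ r, γ x r p j * γ x i r q) * (v p * v q) := by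
      have h1 : ∀ r : Fin n, (∑ p, γ x i p r * v p) * (∑ q, γ x r q j * v q)
          = ∑ p, ∑ q, γ x i p r * γ x r q j * (v p * v q) := by
        intro r
        rw [Finset.sum_mul_sum]
        exact Finset.sum_congr rfl fun p _ => Finset.sum_congr rfl fun q _ => by ring
      calc ∑ r, (∑ p, γ x i p r * v p) * (∑ q, γ x r q j * v q)
          = ∑ r, ∑ p, ∑ q, γ x i p r * γ x r q j * (v p * v q) :=
            Finset.sum_congr rfl fun r _ => h1 r
        _ = ∑ p, ∑ r, ∑ q, γ x i p r * γ x r q j * (v p * v q) := Finset.sum_comm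
        _ = ∑ p, ∑ q, ∑ r, γ x i p r * γ x r q j * (v p * v q) :=
            Finset.sum_congr rfl fun p _ => Finset.sum_comm
        _ = ∑ p, ∑ q, (∑ r, γ x i p r * γ x r q j) * (v p * v q) :=
            Finset.sum_congr rfl fun p _ => Finset.sum_congr rfl fun q _ =>
              (Finset.sum_mul _ _ _).symm
        _ = _ := hS4
    have hb1 : ∑ r, (if i = r then (1:ℝ) else 0) * (∑ q, γ x r q j * v q)
        = ∑ r, γ x i r j * v r := by simp
    have hb2 : ∑ r, (if r = j then (1:ℝ) else 0) * (∑ p, γ x i p r * v p)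
        = ∑ r, γ x i r j * v r := by simp
    have hb3 : ∑ r, (if i = r then (1:ℝ) else 0) * (if r = j then (1:ℝ) else 0)
        = (if i = j then (1:ℝ) else 0) := by simp
    calc ∑ r, ((2 * (∑ p, γ x i p r * v p) - H t * (if i = r then (1:ℝ) else 0))
          * (2 * (∑ p, γ x r p j * v p) - H t * (if r = j then (1:ℝ) else 0)))
        = ∑ r, (4 * ((∑ p, γ x i p r * v p) * (∑ q, γ x r q j * v q))
            - 2 * (H t * ((if i = r then (1:ℝ) else 0) * (∑ q, γ x r q j * v q)))
            - 2 * (H t * ((if r = j then (1:ℝ) else 0) * (∑ p, γ x i p r * v p)))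
            + (H t) ^ 2 * ((if i = r then (1:ℝ) else 0) * (if r = j then (1:ℝ) else 0))) :=
          Finset.sum_congr rfl fun r _ => by ring
      _ = 4 * (∑ r, (∑ p, γ x i p r * v p) * (∑ q, γ x r q j * v q))
            - 2 * (H t * (∑ r, (if i = r then (1:ℝ) else 0) * (∑ q, γ x r q j * v q)))
            - 2 * (H t * (∑ r, (if r = j then (1:ℝ) else 0) * (∑ p, γ x i p r * v p)))
            + (H t) ^ 2 * (∑ r, (if i = r then (1:ℝ) else 0) * (if r = j then (1:ℝ) else 0)) := by
          simp only [Finset.sum_add_distrib, Finset.sum_sub_distrib, ← Finset.mul_sum]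
      _ = _ := by rw [ha, hb1, hb2, hb3]; ring
  -- the curvature side
  have hR : ∑ p, ∑ q, curv γ x i p q j * v p * v q
      = (∑ p, ∑ q, pd (fun y => γ y i p q) x j * (v p * v q))
        - (∑ p, ∑ q, pd (fun y => γ y i p j) x q * (v p * v q))
        + (∑ p, ∑ q, (∑ r, γ x r p q * γ x i r j) * (v p * v q))
        - (∑ p, ∑ q, (∑ r, γ x r p j * γ x i r q) * (v p * v q)) := by
    have e4 : ∀ p q : Fin n, curv γ x i p q j * v p * v q
        = pd (fun y => γ y i p q) x j * (v p * v q)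
          - pd (fun y => γ y i p j) x q * (v p * v q)
          + (∑ r, γ x r p q * γ x i r j) * (v p * v q)
          - (∑ r, γ x r p j * γ x i r q) * (v p * v q) := by
      intro p q; simp only [curv]; ring
    calc ∑ p, ∑ q, curv γ x i p q j * v p * v q
        = ∑ p, ∑ q, (pd (fun y => γ y i p q) x j * (v p * v q)
            - pd (fun y => γ y i p j) x q * (v p * v q)
            + (∑ r, γ x r p q * γ x i r j) * (v p * v q)
            - (∑ r, γ x r p j * γ x i r q) * (v p * v q)) :=
          Finset.sum_congr rfl fun p _ => Finset.sum_congr rfl fun q _ => e4 p q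
      _ = _ := by simp only [Finset.sum_add_distrib, Finset.sum_sub_distrib]
  -- assemble
  simp only [Pdev]
  rw [hT1, hT2]
  simp only [hT3i, hT4i]
  simp only [hWn]
  rw [hA, hB, hC, hR]
  ring
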